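/- For every integer n ≥ 0, f_2(n) = 2^{2n-1}·C(3n/2, n) - 2^{2n-1}·C(3n/2 - 1/2, n), where the binomial coefficients on the right are generalized binomial coefficients with rational upper arguments (equivalently, 2·f_2(n) = 4^n·(C(3n/2, n) - C((3n-1)/2, n))). -/

import Mathlib

open Finset

/-- Generalized binomial coefficient `C(q, k) = q(q-1)⋯(q-k+1)/k!` for rational `q`. -/
noncomputable def qchoose (q : ℚ) (k : ℕ) : ℚ :=
  (∏ j ∈ Finset.range k, (q - j)) / (k.factorial : ℚ)

/-- `f₂(n) = Σ_{i=n}^{2n-1} C(3n, n+i+1)·C(i, n)` (so `f₂(0) = 0`). -/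
def f2 (n : ℕ) : ℕ :=
  ∑ i ∈ Finset.Icc n (2 * n - 1), (3 * n).choose (n + i + 1) * i.choose n

/-!
The substitution `1 + 4x = ((1 + y) / (1 - y))²`, i.e. `x = y / (1 - y)²`, in the coefficient
extraction `[xᵐ] (1 + 4x)^(m + (e - 1)/2)` turns a binomial coefficient with half-integral upper
argument into one with integral exponents:
`4ᵐ · C(m + (e - 1)/2, m) = [yᵐ] (1 + y)^(2m + e) (1 - y)^(-e)`.
Both sides obey the same Pascal-type recurrence in `(m, e) ↦ (m + 1, e + 2)`, since
`(1 + y)² = (1 - y)² + 4y`, so the identity follows from the cases `e = 0, 1` and `m = 0`.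
For `e = n + 1` and `e = n` the two right-hand sides differ, because `(1 + y) - (1 - y) = 2y`,
by `2 [y^(n-1)] (1 + y)^(3n) (1 - y)^(-(n+1))`, and this coefficient is the sum defining `f₂(n)`.
-/

open PowerSeries

namespace PowerSeries

variable {R : Type*} [CommRing R]

theorem coeff_one_add_X_pow (b k : ℕ) : coeff k ((1 + X : R⟦X⟧) ^ b) = b.choose k := by
  rw [← binomialSeries_nat (R := ℤ), binomialSeries_coeff, Ring.choose_natCast,
    Nat.cast_smul_eq_nsmul, nsmul_one]

theorem coeff_mul_invOneSubPow_succ (f : R⟦X⟧) (d m : ℕ) :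
    coeff m (f * (invOneSubPow R (d + 1)).val)
      = ∑ p ∈ antidiagonal m, coeff p.1 f * (d + p.2).choose d := by
  simp [coeff_mul, invOneSubPow_val_succ_eq_mk_add_choose]

theorem constantCoeff_invOneSubPow (d : ℕ) : constantCoeff (invOneSubPow R d).val = 1 := by
  cases d <;> simp [invOneSubPow_zero, invOneSubPow_val_succ_eq_mk_add_choose]

theorem coeff_one_add_X_pow_succ_mul_invOneSubPow_succ (b d m : ℕ) :
    coeff (m + 1) ((1 + X : R⟦X⟧) ^ (b + 1) * (invOneSubPow R (d + 1)).val)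
      = coeff (m + 1) ((1 + X) ^ b * (invOneSubPow R d).val)
        + 2 * coeff m ((1 + X) ^ b * (invOneSubPow R (d + 1)).val) := by
  have h := one_sub_pow_mul_invOneSubPow_val_add_eq_invOneSubPow_val R (d := d) 1
  have key : (1 + X : R⟦X⟧) ^ (b + 1) * (invOneSubPow R (d + 1)).val
      = (1 + X) ^ b * ((1 - X) ^ 1 * (invOneSubPow R (d + 1)).val)
        + X * (C 2 * ((1 + X) ^ b * (invOneSubPow R (d + 1)).val)) := by
    rw [map_ofNat]
    ring
  rw [key, h, map_add, coeff_succ_X_mul, coeff_C_mul]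

theorem coeff_one_add_X_pow_add_two_mul_invOneSubPow_add_two (b d m : ℕ) :
    coeff (m + 1) ((1 + X : R⟦X⟧) ^ (b + 2) * (invOneSubPow R (d + 2)).val)
      = coeff (m + 1) ((1 + X) ^ b * (invOneSubPow R d).val)
        + 4 * coeff m ((1 + X) ^ b * (invOneSubPow R (d + 2)).val) := by
  have h := one_sub_pow_mul_invOneSubPow_val_add_eq_invOneSubPow_val R (d := d) 2
  have key : (1 + X : R⟦X⟧) ^ (b + 2) * (invOneSubPow R (d + 2)).val
      = (1 + X) ^ b * ((1 - X) ^ 2 * (invOneSubPow R (d + 2)).val)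
        + X * (C 4 * ((1 + X) ^ b * (invOneSubPow R (d + 2)).val)) := by
    rw [map_ofNat]
    ring
  rw [key, h, map_add, coeff_succ_X_mul, coeff_C_mul]

end PowerSeries

theorem qchoose_eq_choose (q : ℚ) (k : ℕ) : qchoose q k = Ring.choose q k := by
  rw [Ring.choose_eq_smul, ← Polynomial.aeval_eq_smeval, ← Polynomial.eval_map_algebraMap,
    descPochhammer_map, descPochhammer_eval_eq_prod_range, qchoose, smul_eq_mul, div_eq_inv_mul]

theorem Ring.succ_mul_choose_succ_succ {R : Type*} [CommRing R] [BinomialRing R] (r : R) (k : ℕ) :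
    ((k : R) + 1) * Ring.choose (r + 1) (k + 1) = (r + 1) * Ring.choose r k := by
  simpa [Ring.choose_one_right, add_comm] using Ring.choose_add_smul_choose r k 1

theorem four_pow_mul_choose_sub_half (m : ℕ) :
    4 ^ m * Ring.choose ((m : ℚ) - 1 / 2) m = m.centralBinom := by
  induction m with
  | zero => simp
  | succ m ih =>
    have h := Ring.succ_mul_choose_succ_succ ((m : ℚ) - 1 / 2) m
    have hc : ((m + 1 : ℕ) : ℚ) * (m + 1).centralBinom = 2 * (2 * m + 1) * m.centralBinom := by
      exact_mod_cast Nat.succ_mul_centralBinom_succ m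
    apply mul_left_cancel₀ (show (m : ℚ) + 1 ≠ 0 by positivity)
    push_cast at hc ⊢
    rw [hc, ← ih, show (m : ℚ) + 1 - 1 / 2 = (m - 1 / 2) + 1 by ring]
    linear_combination 4 ^ (m + 1) * h

theorem four_pow_mul_choose_eq_coeff (m e : ℕ) :
    4 ^ m * Ring.choose ((m : ℚ) + ((e : ℚ) - 1) / 2) m
      = coeff m ((1 + X : ℚ⟦X⟧) ^ (2 * m + e) * (invOneSubPow ℚ e).val) := by
  induction e using Nat.twoStepInduction generalizing m with
  | zero =>
    rw [invOneSubPow_zero, Units.val_one, mul_one, coeff_one_add_X_pow, add_zero,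
      ← Nat.centralBinom_eq_two_mul_choose, ← four_pow_mul_choose_sub_half]
    congr 2
    ring
  | one =>
    simp only [coeff_mul_invOneSubPow_succ, coeff_one_add_X_pow, Nat.choose_zero_right,
      Nat.cast_one, mul_one, Nat.sum_antidiagonal_eq_sum_range_succ_mk]
    rw [← Nat.cast_sum, Nat.sum_range_choose_halfway]
    simp [Ring.choose_natCast]
  | more e ih _ =>
    induction m with
    | zero => simp [constantCoeff_invOneSubPow]
    | succ m ihm =>
      have h1 := ih (m + 1)
      rw [show 2 * (m + 1) + e = 2 * m + e + 2 by ring] at h1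
      rw [show 2 * m + (e + 2) = 2 * m + e + 2 by ring] at ihm
      rw [show 2 * (m + 1) + (e + 2) = (2 * m + e + 2) + 2 by ring,
        coeff_one_add_X_pow_add_two_mul_invOneSubPow_add_two, ← ihm, ← h1]
      push_cast
      rw [show (m : ℚ) + 1 + ((e : ℚ) + 2 - 1) / 2 = (m + 1 + ((e : ℚ) - 1) / 2) + 1 by ring,
        Ring.choose_succ_succ,
        show (m : ℚ) + 1 + ((e : ℚ) - 1) / 2 = m + ((e + 2 : ℚ) - 1) / 2 by ring]
      ring

theorem f2_succ_eq_coeff (m : ℕ) :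
    (f2 (m + 1) : ℚ) = coeff m ((1 + X : ℚ⟦X⟧) ^ (3 * (m + 1)) * (invOneSubPow ℚ (m + 2)).val) := by
  rw [coeff_mul_invOneSubPow_succ, ← Nat.sum_antidiagonal_swap]
  simp only [Prod.fst_swap, Prod.snd_swap]
  rw [Nat.sum_antidiagonal_eq_sum_range_succ
      (fun l k => coeff k ((1 + X : ℚ⟦X⟧) ^ (3 * (m + 1))) * ((m + 1 + l).choose (m + 1) : ℚ)),
    f2, show 2 * (m + 1) - 1 = 2 * m + 1 by omega, ← Finset.Ico_add_one_right_eq_Icc,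
    Finset.sum_Ico_eq_sum_range, show 2 * m + 1 + 1 - (m + 1) = m + 1 by omega, Nat.cast_sum]
  refine Finset.sum_congr rfl fun l hl => ?_
  have hl : l ≤ m := Nat.lt_succ_iff.mp (Finset.mem_range.mp hl)
  rw [coeff_one_add_X_pow, ← Nat.choose_symm (by omega : m - l ≤ 3 * (m + 1)),
    show 3 * (m + 1) - (m - l) = m + 1 + (m + 1 + l) + 1 by omega, Nat.cast_mul]

theorem f2_eq (n : ℕ) :
    (f2 n : ℚ) = (2 : ℚ) ^ (2 * (n : ℤ) - 1) * qchoose (3 * n / 2) n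
      - (2 : ℚ) ^ (2 * (n : ℤ) - 1) * qchoose (3 * n / 2 - 1 / 2) n := by
  cases n with
  | zero => norm_num [f2, qchoose]
  | succ m =>
    have hA := four_pow_mul_choose_eq_coeff (m + 1) (m + 2)
    rw [show (m + 1 : ℕ) + ((m + 2 : ℕ) - 1 : ℚ) / 2 = 3 * (m + 1 : ℕ) / 2 by push_cast; ring,
      show 2 * (m + 1) + (m + 2) = 3 * (m + 1) + 1 by ring] at hA
    have hB := four_pow_mul_choose_eq_coeff (m + 1) (m + 1)
    rw [show (m + 1 : ℕ) + ((m + 1 : ℕ) - 1 : ℚ) / 2 = 3 * (m + 1 : ℕ) / 2 - 1 / 2 by push_cast; ring,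
      show 2 * (m + 1) + (m + 1) = 3 * (m + 1) by ring] at hB
    have hdiff := coeff_one_add_X_pow_succ_mul_invOneSubPow_succ (R := ℚ) (3 * (m + 1)) (m + 1) m
    have hpow : (2 : ℚ) ^ (2 * ((m + 1 : ℕ) : ℤ) - 1) * 2 = 4 ^ (m + 1) := by
      rw [← zpow_add_one₀ two_ne_zero, sub_add_cancel, zpow_mul, zpow_natCast]
      norm_num
    rw [f2_succ_eq_coeff, qchoose_eq_choose, qchoose_eq_choose]
    linear_combination (-1 / 2 : ℚ) * (hdiff + hA - hB + (Ring.choose (3 * (m + 1 : ℕ) / 2 : ℚ) (m + 1)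
      - Ring.choose (3 * (m + 1 : ℕ) / 2 - 1 / 2 : ℚ) (m + 1)) * hpow)
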